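/- arXiv:2109.13794 — 2 statements merged into one kernel-verified Lean document; each statement's English description precedes it below -/
import Mathlib

section
/- For every modulus κ with 0 < κ < 1, the function rn : ℝ → ℝ is differentiable and rn'(u) = (κ/2)·cos(φ(u)) for all real u. -/
open Real

/-- The Gauss hypergeometric series `F(a, b; c; x)` with real parameters. -/
noncomputable def hyperF (a b c x : ℝ) : ℝ :=
  ∑' n : ℕ, (Polynomial.eval a (ascPochhammer ℝ n) * Polynomial.eval b (ascPochhammer ℝ n) /
      (Polynomial.eval c (ascPochhammer ℝ n) * (Nat.factorial n : ℝ))) * x ^ n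

/-- `G κ T = ∫₀^T F(1/4, 3/4; 1/2; κ² sin² t) dt`. -/
noncomputable def G (κ T : ℝ) : ℝ :=
  ∫ t in (0:ℝ)..T, hyperF (1/4) (3/4) (1/2) (κ ^ 2 * Real.sin t ^ 2)

/-- The complete integral `K = G κ (π/2)`. -/
noncomputable def K (κ : ℝ) : ℝ := G κ (Real.pi / 2)

/-- The auxiliary function `ψ = arcsin (κ sin φ)`. -/
noncomputable def psi (κ : ℝ) (φ : ℝ → ℝ) (u : ℝ) : ℝ :=
  Real.arcsin (κ * Real.sin (φ u))

/-- The root function `rn = sin (ψ/2)`. -/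
noncomputable def rn (κ : ℝ) (φ : ℝ → ℝ) (u : ℝ) : ℝ :=
  Real.sin (psi κ φ u / 2)

/-!
By the duplication formula `(a)₂ₙ = 4ⁿ (a/2)ₙ ((a+1)/2)ₙ`, the coefficients of `F(1/4, 3/4; 1/2; y²)`
are the even-index coefficients of the binomial series of `(1 - y)^(-1/2)`, so
`F(1/4, 3/4; 1/2; y²) = ((1 - y)^(-1/2) + (1 + y)^(-1/2)) / 2`. Hence `G' (T)` is this closed form at
`y = κ sin T`; it is positive, so `φ` is differentiable with `φ' = 1 / G'(φ)`. The half-angle formula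
gives `cos (arcsin y / 2) = (√(1 + y) + √(1 - y)) / 2 = √(1 - y²) · G'`, and these factors cancel in
the chain rule for `rn = sin (arcsin (κ sin φ) / 2)`, leaving `κ cos φ / 2`.
-/

open Polynomial

theorem ascPochhammer_eval_two_mul {R : Type*} [Field R] [NeZero (2 : R)] (a : R) (n : ℕ) :
    (ascPochhammer R (2 * n)).eval a =
      4 ^ n * (ascPochhammer R n).eval (a / 2) * (ascPochhammer R n).eval ((a + 1) / 2) := by
  induction n with
  | zero => simp
  | succ n ih =>
    rw [show 2 * (n + 1) = 2 * n + 1 + 1 by ring, ascPochhammer_succ_eval,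
      ascPochhammer_succ_eval, ih, ascPochhammer_succ_eval, ascPochhammer_succ_eval]
    push_cast
    field_simp
    ring

theorem Nat.cast_factorial_two_mul (R : Type*) [Field R] [NeZero (2 : R)] (n : ℕ) :
    ((2 * n).factorial : R) = 4 ^ n * (ascPochhammer R n).eval (1 / 2) * n.factorial := by
  simpa using ascPochhammer_eval_two_mul (1 : R) n

theorem Ring.choose_add_natCast_sub_one {R : Type*} [Field R] [CharZero R] (a : R) (n : ℕ) :
    Ring.choose (a + n - 1) n = (ascPochhammer R n).eval a / n.factorial := by
  rw [Ring.choose_eq_smul, descPochhammer_smeval_eq_ascPochhammer, ascPochhammer_smeval_eq_eval,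
    smul_eq_mul, inv_mul_eq_div]
  ring_nf

theorem hasSum_ascPochhammer_div_factorial_mul_pow (a : ℝ) {x : ℝ} (hx : |x| < 1) :
    HasSum (fun n => (ascPochhammer ℝ n).eval a / n.factorial * x ^ n) (1 / (1 - x) ^ a) := by
  have h := (one_div_one_sub_rpow_hasFPowerSeriesOnBall_zero a).hasSum
    (y := x) (by simpa [enorm_eq_nnnorm, ← NNReal.coe_lt_coe] using hx)
  simpa [FormalMultilinearSeries.ofScalars_apply_eq, Ring.choose_add_natCast_sub_one, mul_comm]
    using h

theorem HasSum.even_terms {c : ℕ → ℝ} {x a b : ℝ} (ha : HasSum (fun n => c n * x ^ n) a)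
    (hb : HasSum (fun n => c n * (-x) ^ n) b) :
    HasSum (fun n => c (2 * n) * x ^ (2 * n)) ((a + b) / 2) := by
  have hodd : ∀ m ∉ Set.range (2 * ·), c m * x ^ m + c m * (-x) ^ m = 0 := fun m hm => by
    have : Odd m := Nat.not_even_iff_odd.1 fun ⟨k, hk⟩ => hm ⟨k, by simp only; omega⟩
    rw [this.neg_pow]
    ring
  have h := ((mul_right_injective₀ two_ne_zero).hasSum_iff hodd).2 (ha.add hb)
  refine (h.div_const 2).congr_fun fun n => ?_
  simp only [Function.comp_apply, (even_two_mul n).neg_pow]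
  ring

noncomputable def evenInvSqrt (y : ℝ) : ℝ := (1 / √(1 - y) + 1 / √(1 + y)) / 2

theorem hyperF_quarter_threeQuarters_half_sq {y : ℝ} (hy : |y| < 1) :
    hyperF (1 / 4) (3 / 4) (1 / 2) (y ^ 2) = evenInvSqrt y := by
  have hsum := HasSum.even_terms (hasSum_ascPochhammer_div_factorial_mul_pow (1 / 2) hy)
    (hasSum_ascPochhammer_div_factorial_mul_pow (1 / 2) (by rwa [abs_neg]))
  rw [sub_neg_eq_add, ← sqrt_eq_rpow, ← sqrt_eq_rpow] at hsum
  rw [evenInvSqrt, ← hsum.tsum_eq, hyperF]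
  congr 1 with n
  have hpoch : (0 : ℝ) < (ascPochhammer ℝ n).eval (1 / 2) := ascPochhammer_pos n _ (by norm_num)
  rw [Nat.cast_factorial_two_mul, ascPochhammer_eval_two_mul, pow_mul]
  field_simp
  norm_num
  ring

theorem evenInvSqrt_pos {y : ℝ} (hy : |y| < 1) : 0 < evenInvSqrt y := by
  have := abs_lt.1 hy
  have : 0 < √(1 - y) := sqrt_pos.2 (by linarith)
  have : 0 < √(1 + y) := sqrt_pos.2 (by linarith)
  unfold evenInvSqrt
  positivity

theorem cos_arcsin_half {y : ℝ} (hy : |y| < 1) :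
    cos (arcsin y / 2) = √(1 - y ^ 2) * evenInvSqrt y := by
  obtain ⟨hy₁, hy₂⟩ := abs_lt.1 hy
  have ha := sqrt_pos.2 (by linarith : 0 < 1 - y)
  have hb := sqrt_pos.2 (by linarith : 0 < 1 + y)
  have hab : √(1 - y ^ 2) = √(1 - y) * √(1 + y) := by
    rw [← sqrt_mul (by linarith)]; ring_nf
  have hsq : (1 + √(1 - y ^ 2)) / 2 = ((√(1 - y) + √(1 + y)) / 2) ^ 2 := by
    rw [hab]; ring_nf; rw [sq_sqrt (by linarith), sq_sqrt (by linarith)]; ring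
  rw [cos_half (by linarith [neg_pi_div_two_le_arcsin y, pi_pos])
    (by linarith [arcsin_le_pi_div_two y, pi_pos]), cos_arcsin, hsq, sqrt_sq (by positivity),
    hab, evenInvSqrt]
  field_simp
  ring

section

variable {κ : ℝ} (hκ : |κ| < 1)
include hκ

theorem abs_mul_sin_lt_one (t : ℝ) : |κ * sin t| < 1 := by
  rw [abs_mul]
  calc |κ| * |sin t| ≤ |κ| := mul_le_of_le_one_right (abs_nonneg κ) (abs_sin_le_one t)
    _ < 1 := hκ

theorem continuous_evenInvSqrt_mul_sin : Continuous fun t => evenInvSqrt (κ * sin t) := by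
  have h := fun t => abs_lt.1 (abs_mul_sin_lt_one hκ t)
  unfold evenInvSqrt
  fun_prop (disch := intro t; exact (sqrt_pos.2 (by linarith [h t])).ne')

theorem hasDerivAt_G (T : ℝ) : HasDerivAt (G κ) (evenInvSqrt (κ * sin T)) T := by
  have hG : G κ = fun T => ∫ t in (0 : ℝ)..T, evenInvSqrt (κ * sin t) := by
    ext T
    refine intervalIntegral.integral_congr fun t _ => ?_
    simp only [← hyperF_quarter_threeQuarters_half_sq (abs_mul_sin_lt_one hκ t), mul_pow]
  rw [hG]
  exact (continuous_evenInvSqrt_mul_sin hκ).integral_hasStrictDerivAt 0 T |>.hasDerivAt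

theorem strictMono_G : StrictMono (G κ) :=
  strictMono_of_hasDerivAt_pos (hasDerivAt_G hκ)
    fun T => evenInvSqrt_pos (abs_mul_sin_lt_one hκ T)

variable {φ : ℝ → ℝ} (hφ : Function.RightInverse φ (G κ))
include hφ

theorem hasDerivAt_of_rightInverse_G (u : ℝ) :
    HasDerivAt φ (evenInvSqrt (κ * sin (φ u)))⁻¹ u := by
  have hφ_mono : StrictMono φ := fun u v huv => by
    rw [← (strictMono_G hκ).lt_iff_lt, hφ u, hφ v]
    exact huv
  have hφ_surj : φ.Surjective :=
    (hφ.leftInverse_of_injective (strictMono_G hκ).injective).surjective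
  exact .of_local_left_inverse (hφ_mono.monotone.continuous_of_surjective hφ_surj).continuousAt
    (hasDerivAt_G hκ (φ u)) (evenInvSqrt_pos (abs_mul_sin_lt_one hκ _)).ne'
    (.of_forall hφ)

theorem hasDerivAt_rn (u : ℝ) : HasDerivAt (rn κ φ) (κ / 2 * cos (φ u)) u := by
  have hy := abs_mul_sin_lt_one hκ (φ u)
  obtain ⟨hy₁, hy₂⟩ := abs_lt.1 hy
  have hψ := (hasDerivAt_arcsin hy₁.ne' hy₂.ne).comp u
    (((hasDerivAt_sin _).comp u (hasDerivAt_of_rightInverse_G hκ hφ u)).const_mul κ)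
  refine ((hasDerivAt_sin _).comp u (hψ.div_const 2)).congr_deriv ?_
  simp only [Function.comp_apply]
  rw [cos_arcsin_half hy]
  generalize κ * sin (φ u) = y at *
  have hpos := evenInvSqrt_pos hy
  have hsq : 0 < √(1 - y ^ 2) := sqrt_pos.2 (by nlinarith)
  field_simp

end

theorem stmt9_general (κ : ℝ) (hκ₀ : 0 < κ) (hκ₁ : κ < 1)
    (φ : ℝ → ℝ)
    (hφ₂ : Function.RightInverse φ (G κ)) :
    Differentiable ℝ (rn κ φ) ∧
      ∀ u : ℝ, deriv (rn κ φ) u = κ / 2 * Real.cos (φ u) := by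
  have hκ : |κ| < 1 := abs_lt.2 ⟨by linarith, hκ₁⟩
  exact ⟨fun u => (hasDerivAt_rn hκ hφ₂ u).differentiableAt,
    fun u => (hasDerivAt_rn hκ hφ₂ u).deriv⟩

theorem stmt9 (κ : ℝ) (hκ₀ : 0 < κ) (hκ₁ : κ < 1)
    (φ : ℝ → ℝ) (hφ₁ : Function.LeftInverse φ (G κ))
    (hφ₂ : Function.RightInverse φ (G κ)) :
    Differentiable ℝ (rn κ φ) ∧
      ∀ u : ℝ, deriv (rn κ φ) u = κ / 2 * Real.cos (φ u) :=
  stmt9_general κ hκ₀ hκ₁ φ hφ₂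
end

section
/- For every modulus κ with 0 < κ < 1 and every real u, cos(φ(u + 2K)) = −cos(φ(u)) and cos(ψ(u + 2K)) = cos(ψ(u)); consequently the function cn₂ = cos ∘ φ : ℝ → ℝ has period 4K while the function dn₂ = cos ∘ ψ : ℝ → ℝ has period 2K. -/
open Real

/-!
The integrand `F(1/4, 3/4; 1/2; κ² sin² t)` is continuous (the series converges for `|x| < 1`),
`π`-periodic and symmetric under `t ↦ π - t`. Hence `G (T + π) = G T + 2K`, and inverting,
`φ (u + 2K) = φ u + π`. Then `cos φ` changes sign, while `sin φ` changes sign and `ψ` with it,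
so `cos ψ` is unchanged.
-/

open Function intervalIntegral

theorem hyperF_eq_ordinaryHypergeometric (a b c : ℝ) : hyperF a b c = ₂F₁ a b c := by
  rw [ordinaryHypergeometric_eq_tsum]
  funext x
  refine tsum_congr fun n => ?_
  simp only [smul_eq_mul, div_eq_mul_inv, mul_inv]
  ring

theorem continuousOn_hyperF {a b c : ℝ}
    (habc : ∀ k : ℕ, (k : ℝ) ≠ -a ∧ (k : ℝ) ≠ -b ∧ (k : ℝ) ≠ -c) :
    ContinuousOn (hyperF a b c) (Metric.ball 0 1) := by
  have h := (ordinaryHypergeometricSeries ℝ a b c).continuousOn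
  rw [ordinaryHypergeometricSeries_radius_eq_one ℝ a b c habc, ← ENNReal.coe_one,
    Metric.eball_coe] at h
  rwa [hyperF_eq_ordinaryHypergeometric]

theorem continuous_G_integrand {κ : ℝ} (hκ : κ ^ 2 < 1) :
    Continuous fun t => hyperF (1/4) (3/4) (1/2) (κ ^ 2 * sin t ^ 2) := by
  have habc : ∀ k : ℕ, (k : ℝ) ≠ -(1/4) ∧ (k : ℝ) ≠ -(3/4) ∧ (k : ℝ) ≠ -(1/2) := fun k => by
    have := k.cast_nonneg (α := ℝ)
    refine ⟨?_, ?_, ?_⟩ <;> linarith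
  refine (continuousOn_hyperF habc).comp_continuous (by fun_prop) fun t => ?_
  rw [mem_ball_zero_iff, norm_of_nonneg (by positivity)]
  nlinarith [sin_sq_le_one t, sq_nonneg κ]

theorem integral_zero_add_period_of_symm {f : ℝ → ℝ} {p : ℝ} (hf : Continuous f)
    (hper : Periodic f p) (hsymm : ∀ t, f (p - t) = f t) (T : ℝ) :
    ∫ t in 0..T + p, f t = (∫ t in 0..T, f t) + 2 * ∫ t in 0..p / 2, f t := by
  have hint : ∀ a b, IntervalIntegrable f MeasureTheory.volume a b :=
    fun a b => hf.intervalIntegrable a b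
  have hhalf : ∫ t in p / 2..p, f t = ∫ t in 0..p / 2, f t := by
    simpa [hsymm, sub_half] using (integral_comp_sub_left f p (a := 0) (b := p / 2)).symm
  rw [hper.intervalIntegral_add_eq_add 0 T hint, zero_add,
    ← integral_add_adjacent_intervals (hint 0 (p / 2)) (hint (p / 2) p), hhalf, two_mul]

theorem semiconj_G {κ : ℝ} (hκ : κ ^ 2 < 1) : Semiconj (G κ) (· + π) (· + 2 * K κ) := fun T => by
  refine integral_zero_add_period_of_symm (continuous_G_integrand hκ) (fun t => ?_)
    (fun t => ?_) T
  · simp only [sin_add_pi, neg_sq]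
  · simp only [sin_pi_sub]

theorem stmt19 (κ : ℝ) (hκ₀ : 0 < κ) (hκ₁ : κ < 1)
    (φ : ℝ → ℝ) (hφ₁ : Function.LeftInverse φ (G κ))
    (hφ₂ : Function.RightInverse φ (G κ)) :
    (∀ u : ℝ, Real.cos (φ (u + 2 * K κ)) = - Real.cos (φ u)) ∧
      (∀ u : ℝ, Real.cos (psi κ φ (u + 2 * K κ)) = Real.cos (psi κ φ u)) ∧
      Function.Periodic (Real.cos ∘ φ) (4 * K κ) ∧
      Function.Periodic (Real.cos ∘ psi κ φ) (2 * K κ) := by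
  have hφ : ∀ u, φ (u + 2 * K κ) = φ u + π :=
    (semiconj_G (pow_lt_one₀ hκ₀.le hκ₁ two_ne_zero)).inverse_left hφ₁ hφ₂
  have hcos : ∀ u, cos (φ (u + 2 * K κ)) = -cos (φ u) := fun u => by
    rw [hφ, cos_add_pi]
  have hpsi : ∀ u, cos (psi κ φ (u + 2 * K κ)) = cos (psi κ φ u) := fun u => by
    rw [psi, psi, hφ, sin_add_pi, mul_neg, arcsin_neg, cos_neg]
  refine ⟨hcos, hpsi, fun u => ?_, hpsi⟩
  simp only [comp_apply, show u + 4 * K κ = u + 2 * K κ + 2 * K κ by ring, hcos, neg_neg]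
end
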